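/- arXiv:0901.4079 — 6 statements merged into one kernel-verified Lean document; each statement's English description precedes it below -/
import Mathlib

section
/- Let N ≥ 2 and let F = RatFunc ℂ be the field of rational functions in one variable u over ℂ. Define C ∈ F[X] by C(X) = X^N + Σ_{s=1}^{⌊N/2⌋} (-1)^s · (N/(N-s)) · binom(N-s, s) · u^s · X^{N-2s}. Then the Galois group of C over F is cyclic of order 2 (isomorphic to ℤ/2ℤ). -/
/-!
Let `v` be a square root of `u`. The parameter `u` has weight two in `C`, so
`C(X) = v ^ N * D(X / v)` where `D` is `C` at `u = 1`, a polynomial over `ℂ`. Hence `C` splits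
over `ℂ(u)(v)`, a quadratic extension, and the Galois group has order at most two. The
`X ^ (N - 2)` coefficient of `D` is `-N ≠ 0`, so `D ≠ X ^ N` has a root `r ≠ 0`; then `v * r` is a
root of `C`, and if `C` split over `ℂ(u)` then `v` would lie in `ℂ(u)`, which it does not.
-/

open Polynomial Module

section GaloisGroupOfPrimeDegree

variable {F K : Type*} [Field F] [Field K] [Algebra F K] {p : F[X]}

theorem Polynomial.finrank_splittingField_eq_of_splits_map (hK : (finrank F K).Prime)
    (hpK : (p.map (algebraMap F K)).Splits) (hp : ¬ p.Splits) :
    finrank F p.SplittingField = finrank F K := by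
  have : FiniteDimensional F K := Module.finite_of_finrank_pos hK.pos
  let _ : Algebra p.SplittingField K := (SplittingField.lift p hpK).toRingHom.toAlgebra
  have : IsScalarTower F p.SplittingField K :=
    .of_algebraMap_eq fun x ↦ ((SplittingField.lift p hpK).commutes x).symm
  have hdvd : finrank F p.SplittingField ∣ finrank F K :=
    ⟨_, (finrank_mul_finrank F p.SplittingField K).symm⟩
  have hne : finrank F p.SplittingField ≠ 1 := by
    rwa [Ne, ← Subalgebra.bot_eq_top_iff_finrank_eq_one, eq_comm,
      ← IsSplittingField.splits_iff p.SplittingField p]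
  exact ((Nat.dvd_prime hK).mp hdvd).resolve_left hne

theorem Polynomial.Gal.nonempty_mulEquiv_of_splits_map [CharZero F] {q : ℕ} [Fact q.Prime]
    (hK : finrank F K = q) (hpK : (p.map (algebraMap F K)).Splits) (hp : ¬ p.Splits) :
    Nonempty (p.Gal ≃* Multiplicative (ZMod q)) := by
  have hcard : Nat.card p.Gal = q := by
    rw [← hK, ← finrank_splittingField_eq_of_splits_map (hK ▸ Fact.out) hpK hp]
    have : IsGalois F p.SplittingField := ⟨⟩
    exact IsGalois.card_aut_eq_finrank F p.SplittingField
  exact ⟨mulEquivOfPrimeCardEq hcard (by simp)⟩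

end GaloisGroupOfPrimeDegree

theorem RatFunc.sq_ne_X {k : Type*} [Field k] (f : RatFunc k) : f ^ 2 ≠ RatFunc.X := by
  intro h
  have hf : f ≠ 0 := by
    rintro rfl
    exact RatFunc.X_ne_zero (by simpa using h.symm)
  have hdeg := congrArg RatFunc.intDegree h
  rw [pow_two, RatFunc.intDegree_mul hf hf, RatFunc.intDegree_X] at hdeg
  omega

section SquareRoot

variable {F : Type*} [Field F] {a : F}

theorem AdjoinRoot.finrank_X_sq_sub_C (ha : ∀ b : F, b ^ 2 ≠ a) :
    finrank F (AdjoinRoot (X ^ 2 - C a)) = 2 := by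
  have hq := X_pow_sub_C_irreducible_of_prime Nat.prime_two ha
  rw [(AdjoinRoot.powerBasis hq.ne_zero).finrank, AdjoinRoot.powerBasis_dim,
    natDegree_X_pow_sub_C]

theorem AdjoinRoot.root_X_sq_sub_C_sq :
    AdjoinRoot.root (X ^ 2 - C a) ^ 2 = AdjoinRoot.of (X ^ 2 - C a) a := by
  rw [← sub_eq_zero, ← AdjoinRoot.mk_X, ← map_pow, ← AdjoinRoot.mk_C, ← map_sub,
    AdjoinRoot.mk_self]

end SquareRoot

theorem Polynomial.degree_sum_C_mul_X_pow_sub_two_mul_lt {R : Type*} [Semiring R] (N : ℕ)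
    (c : ℕ → R) :
    (∑ s ∈ Finset.Icc 1 (N / 2), C (c s) * X ^ (N - 2 * s)).degree < (N : WithBot ℕ) := by
  refine (degree_sum_le _ _).trans_lt ((Finset.sup_lt_iff (WithBot.bot_lt_coe N)).mpr ?_)
  intro s hs
  have hs := Finset.mem_Icc.mp hs
  calc (C (c s) * X ^ (N - 2 * s)).degree ≤ ((N - 2 * s : ℕ) : WithBot ℕ) :=
      degree_C_mul_X_pow_le _ _
    _ < (N : WithBot ℕ) := by exact_mod_cast (show N - 2 * s < N by omega)

theorem Polynomial.exists_isRoot_ne_zero_of_ne_X_pow {k : Type*} [Field k] [IsAlgClosed k]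
    {p : k[X]} (hp : p.Monic) (hX : p ≠ X ^ p.natDegree) : ∃ r, r ≠ 0 ∧ p.IsRoot r := by
  by_contra! h
  have hroots : p.roots = Multiset.replicate p.natDegree 0 := by
    refine Multiset.eq_replicate.mpr ⟨(IsAlgClosed.splits p).natDegree_eq_card_roots.symm, ?_⟩
    intro r hr
    by_contra hr0
    exact h r hr0 (isRoot_of_mem_roots hr)
  apply hX
  rw [(IsAlgClosed.splits p).eq_prod_roots_of_monic hp, hroots]
  simp

/-- The paper's polynomial is `rankOneCharPoly ℂ(u) N u`. -/
noncomputable def rankOneCharPoly (K : Type*) [Field K] (N : ℕ) (a : K) : K[X] :=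
  X ^ N + ∑ s ∈ Finset.Icc 1 (N / 2),
    C ((-1 : K) ^ s * ((N : K) / ((N : K) - (s : K))) * (Nat.choose (N - s) s : K) * a ^ s) *
      X ^ (N - 2 * s)

namespace rankOneCharPoly

section

variable {K : Type*} [Field K] (N : ℕ)

theorem monic (a : K) : (rankOneCharPoly K N a).Monic :=
  monic_X_pow_add (degree_sum_C_mul_X_pow_sub_two_mul_lt N _)

theorem natDegree (a : K) : (rankOneCharPoly K N a).natDegree = N := by
  rw [rankOneCharPoly, natDegree_add_eq_left_of_degree_lt, natDegree_X_pow]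
  rw [degree_X_pow]
  exact degree_sum_C_mul_X_pow_sub_two_mul_lt N _

theorem map {L : Type*} [Field L] (f : K →+* L) (a : K) :
    (rankOneCharPoly K N a).map f = rankOneCharPoly L N (f a) := by
  simp [rankOneCharPoly, Polynomial.map_sum, map_div₀]

theorem coeff_sub_two [CharZero K] (hN : 2 ≤ N) (a : K) :
    (rankOneCharPoly K N a).coeff (N - 2) = -N * a := by
  rw [rankOneCharPoly, coeff_add, coeff_X_pow, if_neg (by omega), zero_add, finsetSum_coeff,
    Finset.sum_eq_single_of_mem 1 (Finset.mem_Icc.mpr ⟨le_rfl, by omega⟩)]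
  · have h1 : (N : K) - 1 ≠ 0 := by
      rw [sub_ne_zero]; exact_mod_cast (show N ≠ 1 by omega)
    rw [coeff_C_mul_X_pow, if_pos (by omega), Nat.choose_one_right,
      Nat.cast_sub (by omega : 1 ≤ N), Nat.cast_one, mul_assoc _ (_ / _),
      div_mul_cancel₀ _ h1]
    ring
  · intro s hs hs1
    rw [coeff_C_mul_X_pow, if_neg (by have := Finset.mem_Icc.mp hs; omega)]

theorem sq_mul {v : K} (hv : v ≠ 0) (a : K) :
    rankOneCharPoly K N (v ^ 2 * a) = C (v ^ N) * (rankOneCharPoly K N a).comp (C v⁻¹ * X) := by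
  simp only [rankOneCharPoly, add_comp, sum_comp, mul_comp, pow_comp, C_comp, X_comp, mul_pow,
    ← C_pow, mul_add, Finset.mul_sum, ← mul_assoc, ← C_mul]
  rw [← mul_pow, mul_inv_cancel₀ hv, one_pow, C_1, one_mul]
  refine congrArg _ (Finset.sum_congr rfl fun s hs ↦ ?_)
  have h2s : 2 * s ≤ N := by have := Finset.mem_Icc.mp hs; omega
  have hpow : v ^ N * v⁻¹ ^ (N - 2 * s) = (v ^ 2) ^ s := by
    rw [← Nat.sub_add_cancel h2s, pow_add, Nat.add_sub_cancel, mul_comm (_ ^ _), mul_assoc,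
      ← mul_pow, mul_inv_cancel₀ hv, one_pow, mul_one, pow_mul]
  rw [← hpow]
  congr 2
  ring

end

section AlgClosedSubfield

variable (k : Type*) {F L : Type*} [Field k] [Field F] [Field L] [Algebra k F] {N : ℕ} {a : F}

theorem exists_isRoot_ne_zero [IsAlgClosed k] [CharZero k] (hN : 2 ≤ N) :
    ∃ r : k, r ≠ 0 ∧ (rankOneCharPoly k N 1).IsRoot r := by
  refine exists_isRoot_ne_zero_of_ne_X_pow (monic N 1) fun h ↦ ?_
  have hcoeff := coeff_sub_two N hN (1 : k)
  rw [h, natDegree, coeff_X_pow, if_neg (by omega)] at hcoeff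
  exact Nat.cast_ne_zero.mpr (by omega : N ≠ 0) (by linear_combination hcoeff)

theorem map_eq_of_sq_eq (φ : F →+* L) {v : L} (hv : v ≠ 0) (hva : v ^ 2 = φ a) :
    (rankOneCharPoly F N a).map φ =
      C (v ^ N) * ((rankOneCharPoly k N 1).map (φ.comp (algebraMap k F))).comp (C v⁻¹ * X) := by
  rw [map, map, map_one, ← sq_mul N hv, hva, mul_one]

theorem splits_map_of_sq_eq [IsAlgClosed k] (φ : F →+* L) {v : L} (hv : v ≠ 0)
    (hva : v ^ 2 = φ a) : ((rankOneCharPoly F N a).map φ).Splits := by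
  rw [map_eq_of_sq_eq k φ hv hva]
  exact .C_mul (Splits.comp_of_degree_le_one ((IsAlgClosed.splits _).map _)
    (degree_C_mul_X_le _)) _

theorem isRoot_map_of_sq_eq (φ : F →+* L) {v : L} (hv : v ≠ 0) (hva : v ^ 2 = φ a) {r : k}
    (hr : (rankOneCharPoly k N 1).IsRoot r) :
    ((rankOneCharPoly F N a).map φ).IsRoot (v * φ (algebraMap k F r)) := by
  rw [map_eq_of_sq_eq k φ hv hva, IsRoot]
  simp only [eval_mul, eval_comp, eval_C, eval_X]
  rw [inv_mul_cancel_left₀ hv, eval_map, ← RingHom.comp_apply, eval₂_at_apply, hr.eq_zero,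
    map_zero, mul_zero]

theorem not_splits [IsAlgClosed k] [CharZero k] (hN : 2 ≤ N) (ha : ∀ b : F, b ^ 2 ≠ a) :
    ¬ (rankOneCharPoly F N a).Splits := by
  intro hsplit
  set φ := algebraMap F (AlgebraicClosure F)
  obtain ⟨v, hva⟩ := IsAlgClosed.exists_pow_nat_eq (φ a) two_pos
  have hv : v ≠ 0 := fun h ↦ ha 0 (φ.injective (by simp_all))
  obtain ⟨r, hr0, hr⟩ := exists_isRoot_ne_zero k hN
  obtain ⟨b, hb⟩ :=
    hsplit.mem_range_of_isRoot (monic N a).ne_zero (isRoot_map_of_sq_eq k φ hv hva hr)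
  refine ha (b / algebraMap k F r) (φ.injective ?_)
  rw [map_pow, map_div₀, hb, mul_div_cancel_right₀ _ (by simpa using hr0), hva]

theorem nonempty_gal_mulEquiv [IsAlgClosed k] [CharZero k] (hN : 2 ≤ N)
    (ha : ∀ b : F, b ^ 2 ≠ a) :
    Nonempty ((rankOneCharPoly F N a).Gal ≃* Multiplicative (ZMod 2)) := by
  have := Fact.mk (X_pow_sub_C_irreducible_of_prime Nat.prime_two ha)
  have : CharZero F := charZero_of_injective_algebraMap (algebraMap k F).injective
  have hv : AdjoinRoot.root (X ^ 2 - C a) ≠ 0 := fun h ↦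
    ha 0 ((AdjoinRoot.of (X ^ 2 - C a)).injective (by
      rw [← AdjoinRoot.root_X_sq_sub_C_sq, h, map_pow, map_zero]))
  exact Gal.nonempty_mulEquiv_of_splits_map (AdjoinRoot.finrank_X_sq_sub_C ha)
    (splits_map_of_sq_eq k _ hv AdjoinRoot.root_X_sq_sub_C_sq)
    (not_splits k hN ha)

end AlgClosedSubfield

end rankOneCharPoly

/-- The Galois group of the rank-one (confining phase) characteristic polynomial
`C(X) = X^N + ∑_{s=1}^{⌊N/2⌋} (-1)^s (N/(N-s)) C(N-s,s) u^s X^{N-2s}` over the rational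
function field `ℂ(u)` is cyclic of order two: `G_{|1)} = ℤ₂`. -/
theorem stmt7 (N : ℕ) (hN : 2 ≤ N)
    (P : Polynomial (RatFunc ℂ))
    (hP : P = X ^ N + ∑ s ∈ Finset.Icc 1 (N / 2),
        C ((-1 : RatFunc ℂ) ^ s * ((N : RatFunc ℂ) / ((N : RatFunc ℂ) - (s : RatFunc ℂ))) *
            (Nat.choose (N - s) s : RatFunc ℂ) * (RatFunc.X : RatFunc ℂ) ^ s) *
          X ^ (N - 2 * s)) :
    Nonempty (P.Gal ≃* Multiplicative (ZMod 2)) := by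
  subst hP
  exact rankOneCharPoly.nonempty_gal_mulEquiv ℂ hN RatFunc.sq_ne_X
end

section
/- Let p, s, q ∈ ℂ with q ≠ 0. Then the degree-six polynomial (X³ + pX - s)² - 4q ∈ ℂ[X] has a repeated root in ℂ (equivalently, fails to be squarefree) if and only if (27s² + 4p³)² - 216·q·(27s² - 4p³) + 11664·q² = 0. -/
/-!
Write `g = X³ + pX - s`, so the sextic is `f = g² - 4q` and `f' = 2 g g'`. A double root `z` of `f`
satisfies `g(z)² = 4q ≠ 0`, hence `g(z) ≠ 0` and `z` is a critical point of `g`. Writing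
`p = -3r²`, the critical points are `±r`, and the given polynomial in `p, s, q` equals
`729 (g(r)² - 4q)(g(-r)² - 4q)`, i.e. it vanishes exactly when `f` vanishes at a critical point of `g`.
-/

open Polynomial

section RepeatedRoot

variable {R : Type*} [CommRing R]

theorem Polynomial.sq_dvd_iff_isRoot_and_isRoot_derivative {f : R[X]} {z : R} :
    (X - C z) ^ 2 ∣ f ↔ f.IsRoot z ∧ f.derivative.IsRoot z := by
  rcases eq_or_ne f 0 with rfl | hf
  · simp
  rw [← le_rootMultiplicity_iff hf, ← one_lt_rootMultiplicity_iff_isRoot hf]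
  rfl

theorem Polynomial.sq_dvd_sq_sub_C_iff [IsDomain R] {g : R[X]} {c z : R} (hc : c ≠ 0)
    (h2 : (2 : R) ≠ 0) :
    (X - C z) ^ 2 ∣ g ^ 2 - C c ↔ g.eval z ^ 2 = c ∧ g.derivative.eval z = 0 := by
  have hderiv : (g ^ 2 - C c).derivative.eval z = 2 * g.eval z * g.derivative.eval z := by
    simp [derivative_pow]
  rw [sq_dvd_iff_isRoot_and_isRoot_derivative, IsRoot, IsRoot, hderiv]
  simp only [eval_sub, eval_pow, eval_C, sub_eq_zero]
  refine and_congr_right fun hgz => ?_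
  have hg : g.eval z ≠ 0 := fun h => hc (by rw [← hgz, h, zero_pow two_ne_zero])
  simp [h2, hg]

end RepeatedRoot

theorem sextic_discr_eq_mul_at_critical_points {R : Type*} [CommRing R] (r s q : R) :
    (27 * s ^ 2 + 4 * (-3 * r ^ 2) ^ 3) ^ 2 - 216 * q * (27 * s ^ 2 - 4 * (-3 * r ^ 2) ^ 3)
        + 11664 * q ^ 2 =
      729 * ((((-r) ^ 3 + (-3 * r ^ 2) * (-r) - s) ^ 2 - 4 * q) *
        ((r ^ 3 + (-3 * r ^ 2) * r - s) ^ 2 - 4 * q)) := by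
  ring

theorem exists_critical_point_sq_eq_iff {K : Type*} [Field K] [IsAlgClosed K] (h3 : (3 : K) ≠ 0)
    (p s q : K) :
    (∃ z : K, (z ^ 3 + p * z - s) ^ 2 = 4 * q ∧ 3 * z ^ 2 + p = 0) ↔
      (27 * s ^ 2 + 4 * p ^ 3) ^ 2 - 216 * q * (27 * s ^ 2 - 4 * p ^ 3) + 11664 * q ^ 2 = 0 := by
  constructor
  · rintro ⟨z, hgz, hz⟩
    obtain rfl : p = -3 * z ^ 2 := by linear_combination hz
    rw [sextic_discr_eq_mul_at_critical_points, sub_eq_zero.2 hgz, mul_zero, mul_zero]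
  · intro hE
    obtain ⟨r, hr⟩ := IsAlgClosed.exists_pow_nat_eq (-p / 3) two_pos
    obtain rfl : p = -3 * r ^ 2 := by field_simp at hr; linear_combination hr
    rw [sextic_discr_eq_mul_at_critical_points] at hE
    have h729 : (729 : K) ≠ 0 := by
      rw [show (729 : K) = 3 ^ 6 by norm_num]
      exact pow_ne_zero 6 h3
    rcases mul_eq_zero.1 ((mul_eq_zero.1 hE).resolve_left h729) with h | h
    · exact ⟨-r, by linear_combination h, by ring⟩
    · exact ⟨r, by linear_combination h, by ring⟩

/-- The sextic `(X³ + pX - s)² - 4q` (with `q ≠ 0`) has a repeated root in `ℂ` if and only if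
`(27s² + 4p³)² - 216 q (27s² - 4p³) + 11664 q² = 0`. -/
theorem stmt8 (p s q : ℂ) (hq : q ≠ 0) :
    (∃ z : ℂ, (X - C z) ^ 2 ∣ (X ^ 3 + C p * X - C s) ^ 2 - C (4 * q)) ↔
      (27 * s ^ 2 + 4 * p ^ 3) ^ 2 - 216 * q * (27 * s ^ 2 - 4 * p ^ 3) + 11664 * q ^ 2 = 0 := by
  have h4q : 4 * q ≠ 0 := by simpa using hq
  simp_rw [sq_dvd_sq_sub_C_iff h4q two_ne_zero]
  rw [← exists_critical_point_sq_eq_iff three_ne_zero]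
  simp [derivative_pow]
end

section
/- Let p, s, q ∈ ℂ with q ≠ 0. Then there exists a monic squarefree polynomial M ∈ ℂ[X] of degree 2 such that M² divides (X³ + pX - s)² - 4q in ℂ[X] if and only if s = 0 and p³ + 27q = 0. -/
/-!
A monic squarefree quadratic over `ℂ` is `(X - α)(X - β)` with `α ≠ β`, so the divisibility says
that `α` and `β` are double roots of `A² - 4q`, where `A = X³ + pX - s`. Since `q ≠ 0`, `A` does
not vanish there, so both are roots of `A' = 3X² + p`; hence `β = -α`, and comparing
`A(α)² = A(-α)²` forces `s = 0`, after which `A(α)² = 4q` with `3α² = -p` gives `p³ + 27q = 0`.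
Conversely, for `s = 0` and `p³ = -27q` the sextic factors as `(X² + p/3)² (X² + 4p/3)`.
-/

open Polynomial

namespace Polynomial

theorem isRoot_and_isRoot_derivative_of_sq_dvd {R : Type*} [CommRing R] {f : R[X]} {a : R}
    (h : (X - C a) ^ 2 ∣ f) : f.IsRoot a ∧ f.derivative.IsRoot a := by
  obtain ⟨k, rfl⟩ := h
  constructor <;> simp [derivative_mul, derivative_pow]

theorem exists_eq_X_sub_C_mul_X_sub_C_of_squarefree {K : Type*} [Field K] [IsAlgClosed K]
    {M : K[X]} (hM : M.Monic) (hsf : Squarefree M) (hdeg : M.natDegree = 2) :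
    ∃ α β : K, α ≠ β ∧ M = (X - C α) * (X - C β) := by
  have hcard : Multiset.card M.roots = M.natDegree := IsAlgClosed.card_roots_eq_natDegree
  obtain ⟨α, β, hroots⟩ := Multiset.card_eq_two.mp (hcard.trans hdeg)
  have hM_eq : M = (X - C α) * (X - C β) := by
    simpa [hroots] using (prod_multiset_X_sub_C_of_monic_of_roots_card_eq hM hcard).symm
  refine ⟨α, β, fun hαβ => not_isUnit_X_sub_C α (hsf _ ⟨1, ?_⟩), hM_eq⟩
  rw [hM_eq, hαβ, mul_one]

theorem squarefree_X_sq_add_C {K : Type*} [Field K] [NeZero (2 : K)] {t : K} (ht : t ≠ 0) :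
    Squarefree (X ^ 2 + C t : K[X]) := by
  have hsep := separable_X_pow_sub_C (n := 2) (-t) (by exact_mod_cast two_ne_zero)
    (neg_ne_zero.mpr ht)
  rw [map_neg, sub_neg_eq_add] at hsep
  exact hsep.squarefree

end Polynomial

section Sextic

variable {K : Type*} [Field K] [CharZero K] {p s q : K}

theorem double_root_conditions_of_sq_dvd {γ : K} (hq : q ≠ 0)
    (h : (X - C γ) ^ 2 ∣ (X ^ 3 + C p * X - C s) ^ 2 - C (4 * q)) :
    (γ ^ 3 + p * γ - s) ^ 2 = 4 * q ∧ 3 * γ ^ 2 + p = 0 := by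
  obtain ⟨hroot, hderiv⟩ := isRoot_and_isRoot_derivative_of_sq_dvd h
  simp only [IsRoot, eval_sub, eval_pow, eval_add, eval_mul, eval_X, eval_C] at hroot
  have hA : γ ^ 3 + p * γ - s ≠ 0 := by
    rintro hA
    rw [hA] at hroot
    exact hq (by linear_combination -hroot / 4)
  refine ⟨by linear_combination hroot, ?_⟩
  simpa [derivative_pow, derivative_mul, hA] using hderiv

theorem eq_zero_and_pow_three_add_eq_zero_of_double_roots {α β : K} (hαβ : α ≠ β)
    (hα : (α ^ 3 + p * α - s) ^ 2 = 4 * q ∧ 3 * α ^ 2 + p = 0)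
    (hβ : (β ^ 3 + p * β - s) ^ 2 = 4 * q ∧ 3 * β ^ 2 + p = 0) :
    s = 0 ∧ p ^ 3 + 27 * q = 0 := by
  have hβα : β = -α := by
    have : (α - β) * (α + β) = 0 := by linear_combination (hα.2 - hβ.2) / 3
    linear_combination (mul_eq_zero.mp this).resolve_left (sub_ne_zero.mpr hαβ)
  subst hβα
  have hα0 : α ≠ 0 := fun h => hαβ (by rw [h, neg_zero])
  have hs : s = 0 := by
    have : 8 * s * α ^ 3 = 0 := by linear_combination hα.1 - hβ.1 + 4 * s * α * hα.2
    simpa [hα0] using this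
  subst hs
  refine ⟨rfl, ?_⟩
  linear_combination -27 / 4 * hα.1 + (p ^ 2 + 15 / 4 * α ^ 2 * p + 9 / 4 * α ^ 4) * hα.2

theorem sq_X_sq_add_C_dvd_of_pow_three_add_eq_zero (hpq : p ^ 3 + 27 * q = 0) :
    (X ^ 2 + C (p / 3)) ^ 2 ∣ (X ^ 3 + C p * X) ^ 2 - C (4 * q) := by
  obtain ⟨t, rfl⟩ : ∃ t, p = 3 * t := ⟨p / 3, by ring⟩
  obtain rfl : q = -t ^ 3 := by linear_combination hpq / 27
  rw [mul_div_cancel_left₀ t three_ne_zero]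
  exact ⟨X ^ 2 + C (4 * t), by simp only [C_mul, C_neg, C_pow, map_ofNat]; ring⟩

end Sextic

/-- The sextic `(X³ + pX - s)² - 4q` (with `q ≠ 0`) has two distinct double roots, i.e. is
divisible by `M²` for some monic squarefree quadratic `M`, if and only if `s = 0` and
`p³ + 27q = 0`. -/
theorem stmt9 (p s q : ℂ) (hq : q ≠ 0) :
    (∃ M : Polynomial ℂ, M.Monic ∧ Squarefree M ∧ M.natDegree = 2 ∧
        M ^ 2 ∣ (X ^ 3 + C p * X - C s) ^ 2 - C (4 * q)) ↔
      s = 0 ∧ p ^ 3 + 27 * q = 0 := by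
  constructor
  · rintro ⟨M, hM, hsf, hdeg, hdvd⟩
    obtain ⟨α, β, hαβ, rfl⟩ := exists_eq_X_sub_C_mul_X_sub_C_of_squarefree hM hsf hdeg
    have hdvdα := (pow_dvd_pow_of_dvd (dvd_mul_right _ (X - C β)) 2).trans hdvd
    have hdvdβ := (pow_dvd_pow_of_dvd (dvd_mul_left _ (X - C α)) 2).trans hdvd
    exact eq_zero_and_pow_three_add_eq_zero_of_double_roots hαβ
      (double_root_conditions_of_sq_dvd hq hdvdα) (double_root_conditions_of_sq_dvd hq hdvdβ)
  · rintro ⟨rfl, hpq⟩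
    have hp : p ≠ 0 := by
      rintro rfl
      exact hq (by linear_combination hpq / 27)
    refine ⟨X ^ 2 + C (p / 3), monic_X_pow_add_C _ two_ne_zero,
      squarefree_X_sq_add_C (div_ne_zero hp three_ne_zero), natDegree_X_pow_add_C, ?_⟩
    simpa using sq_X_sq_add_C_dvd_of_pow_three_add_eq_zero hpq
end

section
/- Let z₁, z₂, z₃, z₄ ∈ ℂ and let c ∈ ℂ with c ≠ 0. Suppose that in ℂ[X] the identity (X + (z₁+z₂)/2)² (X - z₁)(X - z₂) + c = (X + (z₃+z₄)/2)² (X - z₃)(X - z₄) holds. Then (z₁ - z₂)² = 2(z₃ + z₄)(z₁ + z₂ + z₃ + z₄) and (z₃ - z₄)² = 2(z₁ + z₂)(z₁ + z₂ + z₃ + z₄). -/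
open Polynomial

/-!
Write `m = (z₁ + z₂)/2`, `p = z₁ z₂` and `n = (z₃ + z₄)/2`, `q = z₃ z₄`. Both quartics are
depressed, `X⁴ + (p - 3m²) X² + 2m(p - m²) X + m²p`, so comparing coefficients gives
`p - 3m² = q - 3n²`, `m(p - m²) = n(q - n²)` and `m²p + c = n²q`. If `m = n`, the first equation
forces `p = q` and the last one `c = 0`. Otherwise the first two combine to
`(m - n)(p - m² + 2n(m + n)) = 0`, which is the claim, as `(z₁ - z₂)² = 4(m² - p)`.
-/

theorem X_add_C_sq_mul_X_sub_C_mul_X_sub_C {R : Type*} [CommRing R] {m a b : R}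
    (hab : a + b = 2 * m) :
    (X + C m) ^ 2 * (X - C a) * (X - C b) =
      X ^ 4 + C (a * b - 3 * m ^ 2) * X ^ 2 + C (2 * m * (a * b - m ^ 2)) * X +
        C (m ^ 2 * (a * b)) := by
  obtain rfl : b = 2 * m - a := by linear_combination hab
  simp only [map_sub, map_mul, map_pow, map_ofNat]
  ring

theorem coeffs_eq_of_depressed_quartic_eq {R : Type*} [CommRing R] {a₂ a₁ a₀ b₂ b₁ b₀ : R}
    (h : X ^ 4 + C a₂ * X ^ 2 + C a₁ * X + C a₀ = X ^ 4 + C b₂ * X ^ 2 + C b₁ * X + C b₀) :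
    a₂ = b₂ ∧ a₁ = b₁ ∧ a₀ = b₀ := by
  have hcoeff (k : ℕ) := congrArg (coeff · k) h
  refine ⟨?_, ?_, ?_⟩ <;>
    [have := hcoeff 2; have := hcoeff 1; have := hcoeff 0] <;>
    simpa [coeff_X, coeff_C, coeff_X_pow] using this

theorem sq_sub_eq_of_depressed_quartic_coeffs_eq {K : Type*} [Field K] [NeZero (2 : K)]
    {m n p q c : K} (hc : c ≠ 0)
    (h₂ : p - 3 * m ^ 2 = q - 3 * n ^ 2)
    (h₁ : 2 * m * (p - m ^ 2) = 2 * n * (q - n ^ 2))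
    (h₀ : m ^ 2 * p + c = n ^ 2 * q) :
    m ^ 2 - p = 2 * n * (m + n) ∧ n ^ 2 - q = 2 * m * (m + n) := by
  have hmn : m ≠ n := by
    rintro rfl
    have hpq : p = q := by linear_combination h₂
    exact hc (by linear_combination h₀ - m ^ 2 * hpq)
  have hfactor : 2 * ((m - n) * (p - m ^ 2 + 2 * n * (m + n))) = 0 := by
    linear_combination h₁ - 2 * n * h₂
  have hp : m ^ 2 - p = 2 * n * (m + n) := by
    have h := (mul_eq_zero.mp ((mul_eq_zero.mp hfactor).resolve_left two_ne_zero)).resolve_left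
      (sub_ne_zero.mpr hmn)
    linear_combination -h
  exact ⟨hp, by linear_combination hp + h₂⟩

/-- If two quartics, each with a double root at minus half the sum of their two simple
roots, differ by a nonzero constant `c`, then
`(z₁ - z₂)² = 2(z₃ + z₄)(z₁ + z₂ + z₃ + z₄)` and
`(z₃ - z₄)² = 2(z₁ + z₂)(z₁ + z₂ + z₃ + z₄)`. -/
theorem stmt13 (z₁ z₂ z₃ z₄ c : ℂ) (hc : c ≠ 0)
    (h : (X + C ((z₁ + z₂) / 2)) ^ 2 * (X - C z₁) * (X - C z₂) + C c =
         (X + C ((z₃ + z₄) / 2)) ^ 2 * (X - C z₃) * (X - C z₄)) :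
    (z₁ - z₂) ^ 2 = 2 * (z₃ + z₄) * (z₁ + z₂ + z₃ + z₄) ∧
    (z₃ - z₄) ^ 2 = 2 * (z₁ + z₂) * (z₁ + z₂ + z₃ + z₄) := by
  rw [X_add_C_sq_mul_X_sub_C_mul_X_sub_C (by ring), X_add_C_sq_mul_X_sub_C_mul_X_sub_C (by ring),
    add_assoc, ← C_add] at h
  obtain ⟨h₂, h₁, h₀⟩ := coeffs_eq_of_depressed_quartic_eq h
  obtain ⟨h₁₂, h₃₄⟩ := sq_sub_eq_of_depressed_quartic_coeffs_eq hc h₂ h₁ h₀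
  exact ⟨by linear_combination 4 * h₁₂, by linear_combination 4 * h₃₄⟩
end

section
/- Let z₁, z₂, z₃, z₄, t ∈ ℂ with t ≠ 0, and suppose that in ℂ[X] the identity (X + (z₁+z₂)/2)² (X - z₁)(X - z₂) + 4t = (X + (z₃+z₄)/2)² (X - z₃)(X - z₄) holds. Define a = (z₁ + z₂ + z₃ + z₄)/2 and b = (z₁ + z₂)(z₃ + z₄)/4, and set C(X) = (X + (z₁+z₂)/2)² (X - z₁)(X - z₂) + 2t. Then C(X) = X⁴ + 2(b - a²)X² - 4abX + (a⁴ - 6a²b + 2b²)/2, and 16·t² = a²·(a² - 4b)³. -/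
/-!
A quartic `(X + u)² (X - z₁) (X - z₂)` with `z₁ + z₂ = 2u` has no cubic term, so it is the
depressed quartic determined by `u` and `e = z₁ z₂`. Comparing the `X²` and `X` coefficients of
the two sides of the hypothesis gives `(u - v) e = (u - v) (u² - 2uv - 2v²)`; here `u ≠ v`, since
otherwise the constant terms would force `t = 0`. The constant terms then give
`4t = (u + v) (v - u)³`, and with `a = u + v`, `b = uv`, `a² - 4b = (u - v)²` both claims become
polynomial identities.
-/

open Polynomial

section DepressedQuartic

variable {R : Type*} [CommRing R]

noncomputable def depressedQuartic (c₂ c₁ c₀ : R) : R[X] :=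
  X ^ 4 + C c₂ * X ^ 2 + C c₁ * X + C c₀

theorem depressedQuartic_add_C (c₂ c₁ c₀ d : R) :
    depressedQuartic c₂ c₁ c₀ + C d = depressedQuartic c₂ c₁ (c₀ + d) := by
  rw [depressedQuartic, depressedQuartic, C_add, add_assoc]

theorem depressedQuartic_neg (c₂ c₁ c₀ : R) :
    depressedQuartic c₂ (-c₁) c₀ = X ^ 4 + C c₂ * X ^ 2 - C c₁ * X + C c₀ := by
  rw [depressedQuartic, C_neg, neg_mul, ← sub_eq_add_neg]

theorem depressedQuartic_inj {c₂ c₁ c₀ d₂ d₁ d₀ : R} :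
    depressedQuartic c₂ c₁ c₀ = depressedQuartic d₂ d₁ d₀ ↔ c₂ = d₂ ∧ c₁ = d₁ ∧ c₀ = d₀ := by
  constructor
  · intro h
    have hcoeff (n : ℕ) := congrArg (coeff · n) h
    simp only [depressedQuartic, coeff_add, coeff_X_pow, coeff_C_mul, coeff_X, coeff_C] at hcoeff
    exact ⟨by simpa using hcoeff 2, by simpa using hcoeff 1, by simpa using hcoeff 0⟩
  · rintro ⟨rfl, rfl, rfl⟩
    rfl

theorem sq_mul_X_sub_C_mul_X_sub_C_eq_depressedQuartic {u z₁ z₂ : R} (h : z₁ + z₂ = 2 * u) :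
    (X + C u) ^ 2 * (X - C z₁) * (X - C z₂) =
      depressedQuartic (z₁ * z₂ - 3 * u ^ 2) (2 * (u * (z₁ * z₂ - u ^ 2))) (u ^ 2 * (z₁ * z₂)) := by
  have hC : C z₁ + C z₂ = 2 * C u := by rw [← C_add, h, C_mul, C_ofNat]
  simp only [depressedQuartic, C_sub, C_mul, C_pow, C_ofNat]
  linear_combination (-(X + C u) ^ 2 * X) * hC

end DepressedQuartic

/-- The coefficient equations of `(X + u)² (X² - 2uX + e) + c = (X + v)² (X² - 2vX + f)`. -/
theorem eq_and_eq_of_coeff_eqs {R : Type*} [CommRing R] [IsDomain R] {u v e f c : R}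
    (hc : c ≠ 0) (h₂ : e - 3 * u ^ 2 = f - 3 * v ^ 2) (h₁ : u * (e - u ^ 2) = v * (f - v ^ 2))
    (h₀ : u ^ 2 * e + c = v ^ 2 * f) :
    e = u ^ 2 - 2 * u * v - 2 * v ^ 2 ∧ c = (u + v) * (v - u) ^ 3 := by
  have huv : u - v ≠ 0 := by
    intro huv
    obtain rfl : u = v := sub_eq_zero.1 huv
    exact hc (by linear_combination h₀ - u ^ 2 * h₂)
  have he : e = u ^ 2 - 2 * u * v - 2 * v ^ 2 :=
    mul_left_cancel₀ huv (by linear_combination h₁ - v * h₂)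
  exact ⟨he, by linear_combination h₀ - v ^ 2 * h₂ - (u ^ 2 - v ^ 2) * he⟩

/-- Forward direction of the rational parametrization of the variety `𝒩_{|2,1)}`: if
`C - 2t` and `C + 2t` each have a double root as indicated, then with
`a = (z₁+z₂+z₃+z₄)/2` and `b = (z₁+z₂)(z₃+z₄)/4` one has
`C(X) = X⁴ + 2(b-a²)X² - 4abX + (a⁴-6a²b+2b²)/2` and `16 t² = a² (a²-4b)³`. -/
theorem stmt14 (z₁ z₂ z₃ z₄ t : ℂ) (ht : t ≠ 0)
    (h : (X + C ((z₁ + z₂) / 2)) ^ 2 * (X - C z₁) * (X - C z₂) + C (4 * t) =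
         (X + C ((z₃ + z₄) / 2)) ^ 2 * (X - C z₃) * (X - C z₄))
    (a b : ℂ) (hab : a = (z₁ + z₂ + z₃ + z₄) / 2 ∧ b = (z₁ + z₂) * (z₃ + z₄) / 4)
    (Cpol : Polynomial ℂ)
    (hC : Cpol = (X + C ((z₁ + z₂) / 2)) ^ 2 * (X - C z₁) * (X - C z₂) + C (2 * t)) :
    Cpol = X ^ 4 + C (2 * (b - a ^ 2)) * X ^ 2 - C (4 * a * b) * X +
        C ((a ^ 4 - 6 * a ^ 2 * b + 2 * b ^ 2) / 2) ∧
      16 * t ^ 2 = a ^ 2 * (a ^ 2 - 4 * b) ^ 3 := by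
  set u := (z₁ + z₂) / 2
  set v := (z₃ + z₄) / 2
  obtain rfl : a = u + v := by rw [hab.1]; ring
  obtain rfl : b = u * v := by rw [hab.2]; ring
  rw [sq_mul_X_sub_C_mul_X_sub_C_eq_depressedQuartic (by ring), depressedQuartic_add_C] at h hC
  rw [sq_mul_X_sub_C_mul_X_sub_C_eq_depressedQuartic (by ring), depressedQuartic_inj] at h
  obtain ⟨h₂, h₁, h₀⟩ := h
  obtain ⟨he, h4t⟩ := eq_and_eq_of_coeff_eqs (mul_ne_zero (by norm_num) ht) h₂
    (mul_left_cancel₀ two_ne_zero h₁) h₀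
  refine ⟨?_, by linear_combination (4 * t + (u + v) * (v - u) ^ 3) * h4t⟩
  rw [hC, ← depressedQuartic_neg, depressedQuartic_inj]
  exact ⟨by linear_combination he, by linear_combination 2 * u * he,
    by linear_combination u ^ 2 * he + h4t / 2⟩
end

section
/- For all natural numbers N and all r ≥ 1, the sum over all r-tuples (N₁, …, N_r) of natural numbers with N₁ + ⋯ + N_r = N of the product N₁·N₂⋯N_r equals the binomial coefficient binom(N + r - 1, 2r - 1). -/
/-! Splitting off the first part gives the recursion `v̂_{r+1}(N) = ∑_{i+j=N} i · v̂_r(j)`, and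
`binom(N + r - 1, 2r - 1)` satisfies the same recursion by the upper Vandermonde identity
`∑_{i+j=n} binom(i, a) binom(j, c) = binom(n + 1, a + c + 1)`, applied with `a = 1`. -/

open Finset

theorem Finset.Nat.sum_antidiagonalTuple_succ {M : Type*} [AddCommMonoid M] (k n : ℕ)
    (f : (Fin (k + 1) → ℕ) → M) :
    ∑ t ∈ Nat.antidiagonalTuple (k + 1) n, f t =
      ∑ p ∈ antidiagonal n, ∑ t ∈ Nat.antidiagonalTuple k p.2, f (Fin.cons p.1 t) := by
  rw [sum_sigma']
  refine sum_nbij' (fun t ↦ ⟨(t 0, n - t 0), Fin.tail t⟩) (fun x ↦ Fin.cons x.1.1 x.2)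
    ?_ ?_ ?_ ?_ ?_
  · intro t ht
    rw [Nat.mem_antidiagonalTuple, Fin.sum_univ_succ] at ht
    simp only [mem_sigma, HasAntidiagonal.mem_antidiagonal, Nat.mem_antidiagonalTuple]
    exact ⟨by omega, by rw [← ht, Nat.add_sub_cancel_left]; rfl⟩
  · rintro ⟨⟨i, j⟩, t⟩ h
    simp_all [mem_antidiagonalTuple, Fin.sum_cons]
  · simp
  · rintro ⟨⟨i, j⟩, t⟩ h
    simp only [mem_sigma, HasAntidiagonal.mem_antidiagonal] at h
    simp only [Fin.cons_zero, Fin.tail_cons, ← h.1, Nat.add_sub_cancel_left]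
  · simp

-- Upper Vandermonde with `j` shifted to `j + r`: the terms `binom(m, c)` with `m < r` that the
-- shift drops vanish because `r ≤ c`.
theorem Nat.sum_antidiagonal_choose_mul_choose_add {r c : ℕ} (hrc : r ≤ c) (n a : ℕ) :
    ∑ p ∈ antidiagonal n, p.1.choose a * (p.2 + r).choose c = (n + r + 1).choose (a + c + 1) := by
  induction n generalizing a with
  | zero =>
    cases a with
    | zero => simp [Nat.choose_succ_succ r c, Nat.choose_eq_zero_of_lt (Nat.lt_succ_of_le hrc)]
    | succ a => simp [Nat.choose_eq_zero_of_lt (by omega : r + 1 < a + 1 + c + 1)]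
  | succ n ih =>
    rw [Nat.sum_antidiagonal_succ, add_right_comm n 1 r]
    cases a with
    | zero =>
      have hockey := ih 0
      simp only [Nat.choose_zero_right, one_mul, zero_add] at hockey ⊢
      rw [hockey, Nat.choose_succ_succ' (n + r + 1) c]
    | succ a =>
      rw [Nat.choose_zero_succ, zero_mul, zero_add]
      simp_rw [Nat.choose_succ_succ' _ a, add_mul]
      rw [sum_add_distrib, ih, ih, add_right_comm a 1 c, Nat.choose_succ_succ' (n + r + 1)]

theorem Finset.Nat.sum_prod_antidiagonalTuple_succ (s N : ℕ) :
    ∑ t ∈ Nat.antidiagonalTuple (s + 1) N, ∏ i, t i = (N + s).choose (2 * s + 1) := by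
  induction s generalizing N with
  | zero => simp [Nat.antidiagonalTuple_one]
  | succ s ih =>
    rw [Nat.sum_antidiagonalTuple_succ]
    simp only [Fin.prod_cons, ← mul_sum, ih]
    calc ∑ p ∈ antidiagonal N, p.1 * (p.2 + s).choose (2 * s + 1)
        = ∑ p ∈ antidiagonal N, p.1.choose 1 * (p.2 + s).choose (2 * s + 1) := by
          simp only [Nat.choose_one_right]
      _ = (N + (s + 1)).choose (2 * (s + 1) + 1) := by
          rw [Nat.sum_antidiagonal_choose_mul_choose_add (by omega), add_assoc,
            show 1 + (2 * s + 1) + 1 = 2 * (s + 1) + 1 by ring]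

/-- The number of rank-`r` vacua: the sum of `N₁ ⋯ N_r` over all `r`-tuples of natural
numbers with `N₁ + ⋯ + N_r = N` equals `binom(N + r - 1, 2r - 1)`. -/
theorem stmt19 (N r : ℕ) (hr : 1 ≤ r) :
    ∑ t ∈ Finset.Nat.antidiagonalTuple r N, ∏ i, t i =
      Nat.choose (N + r - 1) (2 * r - 1) := by
  obtain ⟨s, rfl⟩ : ∃ s, r = s + 1 := ⟨r - 1, by omega⟩
  rw [Nat.sum_prod_antidiagonalTuple_succ, show N + (s + 1) - 1 = N + s by omega,
    show 2 * (s + 1) - 1 = 2 * s + 1 by omega]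
end
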